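/- In the true-stage construction, let X^s_ℓ = {x : ∃n (x,ℓ,n) ∈ G_s}, and let X_ℓ = {x : ∃n ∀m C(x,n,m)} be the Σ⁰₂ set being approximated. Letting s₀ < s₁ < s₂ < ⋯ enumerate the true stages, X_ℓ = ⋃_i X^{s_i}_ℓ. -/

import Mathlib

namespace StmtTS

/-- `x` appears to be labeled `ℓ` at stage `s` with witness `n`: `C x ℓ n m` has held for all
`m < s`, and `n` is the least such witness. -/
def Appears (C : ℕ → ℕ → ℕ → ℕ → Prop) (x ℓ n s : ℕ) : Prop :=
  (∀ m < s, C x ℓ n m) ∧ ∀ n' < n, ∃ m < s, ¬C x ℓ n' m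

/-- `TrueStageSetup C rk G` axiomatizes the true-stage construction of the stagewise guess
sets `G s` of triples `(x, ℓ, n)` from the computable confirmation predicate `C`, relative to
a fixed effective enumeration of triples with rank function `rk` (triples with the same
`(x, ℓ)` appearing in increasing order of `n`):  `G 0 = ∅`, and at each stage `s + 1` we
either roll back to `G t` for the greatest `t ≤ s` all of whose triples are still confirmed,
or (if no mistake appeared) add the least newly appearing triple, if any. -/
structure TrueStageSetup (C : ℕ → ℕ → ℕ → ℕ → Prop) (rk : ℕ × ℕ × ℕ → ℕ)
    (G : ℕ → Set (ℕ × ℕ × ℕ)) : Prop where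
  comp : ComputablePred fun q : (ℕ × ℕ × ℕ) × ℕ => C q.1.1 q.1.2.1 q.1.2.2 q.2
  rk_comp : Computable rk
  rk_inj : Function.Injective rk
  rk_mono : ∀ x ℓ n n', n < n' → rk (x, ℓ, n) < rk (x, ℓ, n')
  init : G 0 = ∅
  step : ∀ s : ℕ,
    ((∃ q ∈ G s, ¬Appears C q.1 q.2.1 q.2.2 (s + 1)) ∧
      ∃ t ≤ s, (∀ q ∈ G t, Appears C q.1 q.2.1 q.2.2 (s + 1)) ∧
        (∀ t' ≤ s, (∀ q ∈ G t', Appears C q.1 q.2.1 q.2.2 (s + 1)) → t' ≤ t) ∧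
        G (s + 1) = G t) ∨
    ((∀ q ∈ G s, Appears C q.1 q.2.1 q.2.2 (s + 1)) ∧
      ((G (s + 1) = G s ∧ ∀ q ∉ G s, ¬Appears C q.1 q.2.1 q.2.2 (s + 1)) ∨
        (∃ q ∉ G s, Appears C q.1 q.2.1 q.2.2 (s + 1) ∧ G (s + 1) = insert q (G s) ∧
          ∀ q' ∉ G s, Appears C q'.1 q'.2.1 q'.2.2 (s + 1) → rk q ≤ rk q')))
  finite : ∀ s, (G s).Finite

/-- `s ≤₁ t`: `s ≤ t` and `G s ⊆ G t`. -/
def Le1 (G : ℕ → Set (ℕ × ℕ × ℕ)) (s t : ℕ) : Prop := s ≤ t ∧ G s ⊆ G t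

/-- A stage `s` is a true stage if `s ≤₁ t` for all `t > s` (equivalently, all `t ≥ s`). -/
def TrueStage (G : ℕ → Set (ℕ × ℕ × ℕ)) (s : ℕ) : Prop := ∀ t, s ≤ t → G s ⊆ G t

end StmtTS

/-!
A stage `s` is true exactly when every triple of `G s` is true, i.e. pairs an `x ∈ X_ℓ`
with its least witness. A triple added right after a true stage `s` either is true, and then
the next stage is true as well, or is eventually refuted, and then the construction rolls back
to exactly `G s`; so there are infinitely many true stages. By induction on the rank, every
true triple `q` lies in `G t` for all large `t`: once the true triples of smaller rank have
settled, no false triple of rank at most `rk q` appears any more and `q` itself appears, the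
next true stage adds `q`, and the stage after it is again true.
-/

namespace StmtTS

open Filter

abbrev TripleAppears (C : ℕ → ℕ → ℕ → ℕ → Prop) (q : ℕ × ℕ × ℕ) (s : ℕ) : Prop :=
  Appears C q.1 q.2.1 q.2.2 s

def IsTrueTriple (C : ℕ → ℕ → ℕ → ℕ → Prop) (q : ℕ × ℕ × ℕ) : Prop :=
  (∀ m, C q.1 q.2.1 q.2.2 m) ∧ ∀ n' < q.2.2, ∃ m, ¬C q.1 q.2.1 n' m

variable {C : ℕ → ℕ → ℕ → ℕ → Prop} {rk : ℕ × ℕ × ℕ → ℕ} {G : ℕ → Set (ℕ × ℕ × ℕ)}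
  {q : ℕ × ℕ × ℕ} {s t : ℕ}

namespace IsTrueTriple

theorem appears_of_le (hq : IsTrueTriple C q) (hs : TripleAppears C q s) (hst : s ≤ t) :
    TripleAppears C q t := by
  refine ⟨fun m _ => hq.1 m, fun n' hn' => ?_⟩
  obtain ⟨m, hm, hc⟩ := hs.2 n' hn'
  exact ⟨m, by omega, hc⟩

theorem eventually_appears (hq : IsTrueTriple C q) : ∀ᶠ s in atTop, TripleAppears C q s := by
  have hrefuted : ∀ n' ∈ Set.Iio q.2.2, ∀ᶠ s in atTop, ∃ m < s, ¬C q.1 q.2.1 n' m := by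
    intro n' hn'
    obtain ⟨m, hm⟩ := hq.2 n' hn'
    filter_upwards [eventually_gt_atTop m] with s hs using ⟨m, hs, hm⟩
  filter_upwards [(eventually_all_finite (Set.finite_Iio _)).2 hrefuted] with s hs
  exact ⟨fun m _ => hq.1 m, hs⟩

end IsTrueTriple

theorem isTrueTriple_of_frequently_appears (h : ∃ᶠ s in atTop, TripleAppears C q s) :
    IsTrueTriple C q := by
  refine ⟨fun m => ?_, fun n' hn' => ?_⟩
  · obtain ⟨s, hs, happ⟩ := frequently_atTop.1 h (m + 1)
    exact happ.1 m (by omega)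
  · obtain ⟨s, -, happ⟩ := frequently_atTop.1 h 0
    obtain ⟨m, -, hm⟩ := happ.2 n' hn'
    exact ⟨m, hm⟩

theorem eventually_not_appears_of_not_isTrueTriple (hq : ¬IsTrueTriple C q) :
    ∀ᶠ s in atTop, ¬TripleAppears C q s :=
  not_frequently.1 (mt isTrueTriple_of_frequently_appears hq)

theorem TrueStage.eventually_mem (hs : TrueStage G s) (hq : q ∈ G s) : ∀ᶠ t in atTop, q ∈ G t :=
  eventually_atTop.2 ⟨s, fun t ht => hs t ht hq⟩

theorem TrueStage.of_eq (hs : TrueStage G s) (hst : s ≤ t) (heq : G t = G s) : TrueStage G t :=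
  fun u htu => heq ▸ hs u (hst.trans htu)

namespace TrueStageSetup

theorem appears_of_mem (H : TrueStageSetup C rk G) (hq : q ∈ G s) : TripleAppears C q s := by
  cases s with
  | zero => simp [H.init] at hq
  | succ s =>
    rcases H.step s with ⟨-, t, -, hconf, -, heq⟩ | ⟨hconf, ⟨heq, -⟩ | ⟨q', -, happ, heq, -⟩⟩
    · exact hconf q (heq ▸ hq)
    · exact hconf q (heq ▸ hq)
    · rw [heq] at hq
      rcases hq with rfl | hq
      exacts [happ, hconf q hq]

theorem subset_succ_or_rollback (H : TrueStageSetup C rk G) (w : ℕ) :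
    G w ⊆ G (w + 1) ∨ ∃ t ≤ w,
      (∀ t' ≤ w, (∀ q ∈ G t', TripleAppears C q (w + 1)) → t' ≤ t) ∧ G (w + 1) = G t := by
  rcases H.step w with ⟨-, t, htw, -, hmax, heq⟩ | ⟨-, ⟨heq, -⟩ | ⟨q', -, -, heq, -⟩⟩
  · exact .inr ⟨t, htw, hmax, heq⟩
  · exact .inl heq.ge
  · exact .inl (heq ▸ Set.subset_insert _ _)

theorem step_of_trueStage (H : TrueStageSetup C rk G) (hs : TrueStage G s) :
    (G (s + 1) = G s ∧ ∀ q ∉ G s, ¬TripleAppears C q (s + 1)) ∨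
      ∃ q ∉ G s, TripleAppears C q (s + 1) ∧ G (s + 1) = insert q (G s) ∧
        ∀ q' ∉ G s, TripleAppears C q' (s + 1) → rk q ≤ rk q' := by
  rcases H.step s with ⟨⟨q, hq, hnot⟩, -⟩ | ⟨-, hgrow⟩
  · exact absurd (H.appears_of_mem (hs (s + 1) s.le_succ hq)) hnot
  · exact hgrow

theorem trueStage_of_forall_appears (H : TrueStageSetup C rk G)
    (h : ∀ q ∈ G s, ∀ v, s ≤ v → TripleAppears C q v) : TrueStage G s := by
  intro t hst
  induction t using Nat.strong_induction_on with
  | _ t ih =>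
    rcases hst.eq_or_lt with rfl | hlt
    · exact subset_rfl
    obtain ⟨w, rfl⟩ : ∃ w, t = w + 1 := ⟨t - 1, by omega⟩
    rcases H.subset_succ_or_rollback w with hsub | ⟨t', ht'w, hmax, heq⟩
    · exact (ih w (by omega) (by omega)).trans hsub
    · have hst' : s ≤ t' := hmax s (by omega) fun q hq => h q hq (w + 1) (by omega)
      exact heq ▸ ih t' (by omega) hst'

theorem trueStage_iff (H : TrueStageSetup C rk G) :
    TrueStage G s ↔ ∀ q ∈ G s, IsTrueTriple C q :=
  ⟨fun hs _ hq => isTrueTriple_of_frequently_appears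
      ((hs.eventually_mem hq).mono fun _ => H.appears_of_mem).frequently,
    fun h => H.trueStage_of_forall_appears fun q hq _ hv =>
      (h q hq).appears_of_le (H.appears_of_mem hq) hv⟩

theorem trueStage_succ_of_eq_insert (H : TrueStageSetup C rk G) (hs : TrueStage G s)
    (hq : IsTrueTriple C q) (heq : G (s + 1) = insert q (G s)) : TrueStage G (s + 1) := by
  refine H.trueStage_iff.2 ?_
  rw [heq]
  rintro q' (rfl | hq')
  exacts [hq, H.trueStage_iff.1 hs q' hq']

theorem exists_rollback_to_trueStage (H : TrueStageSetup C rk G) (hs : TrueStage G s)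
    (hq : q ∈ G (s + 1)) : ∀ u, s + 1 ≤ u → q ∉ G u → ∃ v, s < v ∧ G v = G s := by
  intro u
  induction u using Nat.strong_induction_on with
  | _ u ih =>
    intro hsu hqu
    obtain ⟨w, rfl⟩ : ∃ w, u = w + 1 := ⟨u - 1, by omega⟩
    have hsw : s + 1 ≤ w := by
      rcases hsu.eq_or_lt with hsu | hsu
      · exact absurd (Nat.succ_injective hsu ▸ hq) hqu
      · omega
    rcases H.subset_succ_or_rollback w with hsub | ⟨t', ht'w, hmax, heq⟩
    · exact ih w (by omega) hsw fun hqw => hqu (hsub hqw)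
    · have hst' : s ≤ t' :=
        hmax s (by omega) fun q' hq' => H.appears_of_mem (hs _ (by omega) hq')
      rcases hst'.eq_or_lt with rfl | hlt
      · exact ⟨w + 1, by omega, heq⟩
      · exact ih t' (by omega) hlt (heq ▸ hqu)

theorem exists_trueStage_gt (H : TrueStageSetup C rk G) (hs : TrueStage G s) :
    ∃ t, s < t ∧ TrueStage G t := by
  rcases H.step_of_trueStage hs with ⟨heq, -⟩ | ⟨q, -, -, heq, -⟩
  · exact ⟨s + 1, s.lt_succ_self, hs.of_eq s.le_succ heq⟩
  by_cases hq : IsTrueTriple C q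
  · exact ⟨s + 1, s.lt_succ_self, H.trueStage_succ_of_eq_insert hs hq heq⟩
  obtain ⟨u, hqu, hsu⟩ :=
    ((eventually_not_appears_of_not_isTrueTriple hq).and (eventually_ge_atTop (s + 1))).exists
  obtain ⟨v, hsv, hv⟩ := H.exists_rollback_to_trueStage hs (heq ▸ Set.mem_insert q _) u hsu
    (mt H.appears_of_mem hqu)
  exact ⟨v, hsv, hs.of_eq hsv.le hv⟩

theorem frequently_trueStage (H : TrueStageSetup C rk G) : ∃ᶠ s in atTop, TrueStage G s := by
  refine frequently_atTop.2 fun N => ?_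
  induction N with
  | zero => exact ⟨0, le_rfl, fun t _ => H.init ▸ Set.empty_subset _⟩
  | succ N ih =>
    obtain ⟨t, hNt, ht⟩ := ih
    obtain ⟨t', htt', ht'⟩ := H.exists_trueStage_gt ht
    exact ⟨t', by omega, ht'⟩

theorem eq_insert_of_least_rank (H : TrueStageSetup C rk G) (hs : TrueStage G s)
    (hqs : q ∉ G s) (hq : TripleAppears C q (s + 1))
    (hleast : ∀ q' ∉ G s, TripleAppears C q' (s + 1) → rk q ≤ rk q') :
    G (s + 1) = insert q (G s) := by
  rcases H.step_of_trueStage hs with ⟨-, hnone⟩ | ⟨q', hq's, hq', heq, hmin⟩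
  · exact absurd hq (hnone q hqs)
  · obtain rfl : q' = q := H.rk_inj (le_antisymm (hmin q hqs hq) (hleast q' hq's hq'))
    exact heq

theorem eventually_mem (H : TrueStageSetup C rk G) (hq : IsTrueTriple C q) :
    ∀ᶠ t in atTop, q ∈ G t := by
  induction hr : rk q using Nat.strong_induction_on generalizing q with
  | _ r ih =>
    have hsettled : ∀ᶠ t in atTop, ∀ q' ∈ rk ⁻¹' Set.Iio r, IsTrueTriple C q' → q' ∈ G t :=
      (eventually_all_finite ((Set.finite_Iio r).preimage H.rk_inj.injOn)).2 fun q' hq' =>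
        eventually_imp_distrib_left.2 fun htrue => ih _ hq' htrue rfl
    have hrefuted : ∀ᶠ t in atTop,
        ∀ q' ∈ rk ⁻¹' Set.Iic r, ¬IsTrueTriple C q' → ¬TripleAppears C q' t :=
      (eventually_all_finite ((Set.finite_Iic r).preimage H.rk_inj.injOn)).2 fun _ _ =>
        eventually_imp_distrib_left.2 eventually_not_appears_of_not_isTrueTriple
    have hnext := (tendsto_add_atTop_nat 1).eventually (hrefuted.and hq.eventually_appears)
    obtain ⟨s, hs, hlow, hnofalse, happ⟩ :=
      (H.frequently_trueStage.and_eventually (hsettled.and hnext)).exists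
    by_cases hqs : q ∈ G s
    · exact hs.eventually_mem hqs
    have hleast : ∀ q' ∉ G s, TripleAppears C q' (s + 1) → rk q ≤ rk q' := by
      intro q' hq's hq'
      by_contra! hlt
      have htrue : IsTrueTriple C q' := by
        by_contra hfalse
        exact hnofalse q' (by simp only [Set.mem_preimage, Set.mem_Iic]; omega) hfalse hq'
      exact hq's (hlow q' (by simpa [hr] using hlt) htrue)
    have heq := H.eq_insert_of_least_rank hs hqs happ hleast
    exact (H.trueStage_succ_of_eq_insert hs hq heq).eventually_mem (heq ▸ Set.mem_insert q _)

end TrueStageSetup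

end StmtTS

open StmtTS in
/-- In the true-stage construction, with `X^s_ℓ = {x : ∃ n, (x,ℓ,n) ∈ G s}` and
`X_ℓ = {x : ∃ n ∀ m, C x ℓ n m}` the Σ⁰₂ set being approximated, `X_ℓ` is the union of the
sets `X^s_ℓ` over the true stages `s`. -/
theorem sigma2_set_eq_union_over_true_stages (C : ℕ → ℕ → ℕ → ℕ → Prop)
    (rk : ℕ × ℕ × ℕ → ℕ) (G : ℕ → Set (ℕ × ℕ × ℕ)) (H : TrueStageSetup C rk G) (ℓ : ℕ) :
    {x : ℕ | ∃ n, ∀ m, C x ℓ n m} =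
      ⋃ s ∈ {s : ℕ | TrueStage G s}, {x : ℕ | ∃ n, (x, ℓ, n) ∈ G s} := by
  classical
  ext x
  simp only [Set.mem_ofPred_eq, Set.mem_iUnion, exists_prop]
  constructor
  · intro hx
    have hq : IsTrueTriple C (x, ℓ, Nat.find hx) :=
      ⟨Nat.find_spec hx, fun n' hn' => by simpa using Nat.find_min hx hn'⟩
    obtain ⟨s, hs, hmem⟩ := (H.frequently_trueStage.and_eventually (H.eventually_mem hq)).exists
    exact ⟨s, hs, _, hmem⟩
  · rintro ⟨s, hs, n, hmem⟩
    exact ⟨n, (H.trueStage_iff.1 hs _ hmem).1⟩
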